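/- Let V be the qutrit tensor with ⟨jk|V|l⟩ = 1/√2 when j,k,l ∈ {0,1,2} are pairwise distinct and 0 otherwise. Then V is planar perfect: all three bipartite reshapings of V (viewing any one leg as input and the other two as output, in cyclic order) are proportional to isometries. -/

import Mathlib

/-!
The entry `V^{jk}_l` only depends on whether `j, k, l` are pairwise distinct, a condition that is
invariant under permuting the legs, so all three reshapings are the same matrix `V`. Moreover
`V = 2^{-1/2} A` for the 0/1 matrix `A` of distinct triples: the column `l` of `A` has its two
nonzero entries at `(j, k)` with `{j, k} = {0, 1, 2} \ {l}`, so distinct columns have disjoint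
supports and `Aᵀ A = 2`, whence `Vᴴ V = 1`.
-/

open Matrix

noncomputable def perfectV : Matrix (Fin 3 × Fin 3) (Fin 3) ℂ :=
  fun jk l =>
    if jk.1 = jk.2 ∨ jk.2 = l ∨ l = jk.1 then 0
    else (1 : ℂ) / Real.sqrt 2

noncomputable def perfectV₂ : Matrix (Fin 3 × Fin 3) (Fin 3) ℂ :=
  fun kl j => perfectV (j, kl.1) kl.2

noncomputable def perfectV₃ : Matrix (Fin 3 × Fin 3) (Fin 3) ℂ :=
  fun lj k => perfectV (lj.2, k) lj.1

def distinctTripleIndicator : Matrix (Fin 3 × Fin 3) (Fin 3) ℕ :=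
  fun jk l => if jk.1 = jk.2 ∨ jk.2 = l ∨ l = jk.1 then 0 else 1

theorem distinctTripleIndicator_transpose_mul_self :
    distinctTripleIndicatorᵀ * distinctTripleIndicator = 2 := by
  decide

theorem perfectV_eq_smul :
    perfectV = ((Real.sqrt 2 : ℂ)⁻¹) • distinctTripleIndicator.map (Nat.castRingHom ℂ) := by
  ext jk l
  simp only [perfectV, distinctTripleIndicator, Matrix.smul_apply, map_apply]
  split_ifs <;> simp

theorem conjTranspose_perfectV_mul_self : perfectVᴴ * perfectV = 1 := by
  have hnormSq : star ((Real.sqrt 2 : ℂ)⁻¹) * (Real.sqrt 2 : ℂ)⁻¹ = 2⁻¹ := by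
    rw [Complex.star_def, map_inv₀, Complex.conj_ofReal, ← mul_inv, ← Complex.ofReal_mul,
      Real.mul_self_sqrt zero_le_two, Complex.ofReal_ofNat]
  rw [perfectV_eq_smul, conjTranspose_smul, Matrix.smul_mul, Matrix.mul_smul, smul_smul, hnormSq,
    ← conjTranspose_map (Nat.castRingHom ℂ) (fun n => (star_natCast n).symm),
    conjTranspose_eq_transpose_of_trivial, ← Matrix.map_mul,
    distinctTripleIndicator_transpose_mul_self, Matrix.map_ofNat (map_zero _),
    ← diagonal_smul, map_ofNat, ← diagonal_one]
  exact congrArg diagonal (funext fun _ => inv_mul_cancel₀ two_ne_zero)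

theorem perfectV₂_eq_perfectV : perfectV₂ = perfectV := by
  ext kl j
  simp only [perfectV₂, perfectV]
  congr 1
  exact propext (by tauto)

theorem perfectV₃_eq_perfectV : perfectV₃ = perfectV := by
  ext lj k
  simp only [perfectV₃, perfectV]
  congr 1
  exact propext (by tauto)

/-- `V` is planar perfect: all three cyclic reshapings of `V` are proportional
to isometries `ℂ³ → ℂ³ ⊗ ℂ³`. -/
theorem perfectV_planar_perfect :
    (∃ c : ℂ, c ≠ 0 ∧ perfectVᴴ * perfectV = c • (1 : Matrix (Fin 3) (Fin 3) ℂ)) ∧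
    (∃ c : ℂ, c ≠ 0 ∧ perfectV₂ᴴ * perfectV₂ = c • (1 : Matrix (Fin 3) (Fin 3) ℂ)) ∧
    (∃ c : ℂ, c ≠ 0 ∧ perfectV₃ᴴ * perfectV₃ = c • (1 : Matrix (Fin 3) (Fin 3) ℂ)) := by
  have isometry : ∃ c : ℂ, c ≠ 0 ∧ perfectVᴴ * perfectV = c • (1 : Matrix (Fin 3) (Fin 3) ℂ) :=
    ⟨1, one_ne_zero, by rw [one_smul, conjTranspose_perfectV_mul_self]⟩
  rw [perfectV₂_eq_perfectV, perfectV₃_eq_perfectV]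
  exact ⟨isometry, isometry, isometry⟩
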